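/- (Theorem 1, existence) There exists a probability distribution (q(s) : s ∈ 𝒮_G) on the finite state space 𝒮_G such that (i) q(s') = Σ_{(s,x) ∈ 𝒮_G × A with Ṽ(s,x) = s'} q(s) p(x) for every s' ∈ 𝒮_G, and (ii) D(G) = Σ_{(s,x) ∈ 𝒮_G × A with V(s,x) ∉ 𝒮_G} q(s) p(x). -/

import Mathlib

/-!
Run the Viterbi algorithm on the i.i.d. source: the minimal distortion of a word of length `n`
is the sum of the increments `min V(S̃ᵢ, Xᵢ₊₁)`, where the reduced states `S̃ᵢ` form a Markov chain
on the finite set `𝒮_G`. From a state of `𝒮_G` the increment is `0` or `1`, and it is `1` exactly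
when `V(S̃ᵢ, Xᵢ₊₁) ∉ 𝒮_G`. So `a_n / n` is a Cesàro mean of expected increments under the laws of
`S̃ᵢ`. Along a subsequence the Cesàro means of these laws converge to a stationary law `q`
(compactness of the simplex), and since `a_n` is superadditive, `a_n / n` converges (Fekete),
necessarily to the `q`-expected increment.
-/

/-- Hamming distance on the alphabet `A`. -/
def ham {A : Type*} [DecidableEq A] (x y : A) : ℕ := if x = y then 0 else 1

/-- `EdgeChain src dst n e` : the first `n` edges of the edge sequence `e` form a
directed path in the labelled graph with source map `src` and destination map `dst`. -/
def EdgeChain {V E : Type*} (src dst : E → V) (n : ℕ) (e : ℕ → E) : Prop :=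
  ∀ i : ℕ, i + 1 < n → dst (e i) = src (e (i + 1))

/-- The graph is strongly connected: for any ordered pair of vertices there is a
(nonempty) directed path from the first to the second. -/
def StronglyConnected {V E : Type*} (src dst : E → V) : Prop :=
  ∀ u v : V, ∃ (l : List E) (h : l ≠ []),
    List.Chain' (fun e f => dst e = src f) l ∧ src (l.head h) = u ∧ dst (l.getLast h) = v

/-- The Viterbi transition operator `V` : `Vop src dst lab s x v` is the minimum of
`s (src e) + d(x, lab e)` over all edges `e` ending at `v`. -/
noncomputable def Vop {V E A : Type*} [DecidableEq A] (src dst : E → V) (lab : E → A)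
    (s : V → ℕ) (x : A) : V → ℕ :=
  fun v => sInf {m : ℕ | ∃ e : E, dst e = v ∧ m = s (src e) + ham x (lab e)}

/-- Minimum component of a state. -/
noncomputable def minS {V : Type*} (s : V → ℕ) : ℕ := sInf (Set.range s)

/-- The reduced Viterbi transition operator `Ṽ`: subtract from `V(s,x)` its minimum
component. -/
noncomputable def Vred {V E A : Type*} [DecidableEq A] (src dst : E → V) (lab : E → A)
    (s : V → ℕ) (x : A) : V → ℕ :=
  fun v => Vop src dst lab s x v - minS (Vop src dst lab s x)

/-- The Viterbi state sequence: `S⁰` is the zero state and `Sⁱ = V(S^{i-1}, xᵢ)`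
(the letter `xᵢ` of the paper is `x (i-1)` here). -/
noncomputable def VSeq {V E A : Type*} [DecidableEq A] (src dst : E → V) (lab : E → A)
    (x : ℕ → A) : ℕ → V → ℕ
  | 0 => fun _ => 0
  | i + 1 => Vop src dst lab (VSeq src dst lab x i) (x i)

/-- The reduced Viterbi state sequence `S̃ⁱ(v) = Sⁱ(v) - min Sⁱ`. -/
noncomputable def SredSeq {V E A : Type*} [DecidableEq A] (src dst : E → V) (lab : E → A)
    (x : ℕ → A) (i : ℕ) : V → ℕ :=
  fun v => VSeq src dst lab x i v - minS (VSeq src dst lab x i)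

/-- The state space `𝒮_G`: the zero state together with everything obtainable from it
by finitely many applications of the reduced Viterbi transition operator. -/
def SG {V E A : Type*} [DecidableEq A] (src dst : E → V) (lab : E → A) : Set (V → ℕ) :=
  { s | ∃ l : List A, s = l.foldl (Vred src dst lab) (fun _ => 0) }

/-- `PrimIndex src dst k` : `k` is positive and any vertex can be reached from any
vertex by a directed path of length exactly `k`. -/
def PrimIndex {V E : Type*} (src dst : E → V) (k : ℕ) : Prop :=
  0 < k ∧ ∀ u v : V, ∃ e : ℕ → E,
    EdgeChain src dst k e ∧ src (e 0) = u ∧ dst (e (k - 1)) = v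

/-- Minimum total Hamming distortion over all directed paths of length `n`. -/
noncomputable def minDist {V E A : Type*} [DecidableEq A] (src dst : E → V) (lab : E → A)
    (n : ℕ) (x : Fin n → A) : ℕ :=
  sInf {m : ℕ | ∃ e : ℕ → E, EdgeChain src dst n e ∧
    m = ∑ i : Fin n, ham (x i) (lab (e i.1))}

/-- `aSeq src dst lab p n` is the expected minimum path distortion
`a_n = E[ min_{paths} Σ d(Xᵢ, L(eᵢ)) ]` for the i.i.d. source with letter distribution `p`. -/
noncomputable def aSeq {V E A : Type*} [DecidableEq A] [Fintype A] (src dst : E → V)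
    (lab : E → A) (p : A → ℝ) (n : ℕ) : ℝ :=
  ∑ x : Fin n → A, (∏ i, p (x i)) * (minDist src dst lab n x : ℝ)


open Filter Topology Finset

section Cesaro

variable {α : Type*} {S : Finset α} {μ : ℕ → α → ℝ}

noncomputable def cesaroMean (μ : ℕ → α → ℝ) (n : ℕ) (i : α) : ℝ :=
  (∑ m ∈ range (n + 1), μ m i) / (n + 1)

lemma cesaroMean_mem_Icc (hμ : ∀ n i, 0 ≤ μ n i) (hμ₁ : ∀ n, ∑ i ∈ S, μ n i = 1)
    (n : ℕ) {i : α} (hi : i ∈ S) : cesaroMean μ n i ∈ Set.Icc 0 1 := by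
  have hle : ∀ m, μ m i ≤ 1 := fun m =>
    hμ₁ m ▸ single_le_sum (fun j _ => hμ m j) hi
  rw [cesaroMean, Set.mem_Icc, div_le_one (by positivity)]
  refine ⟨div_nonneg (sum_nonneg fun m _ => hμ m i) (by positivity), ?_⟩
  calc ∑ m ∈ range (n + 1), μ m i ≤ ∑ _m ∈ range (n + 1), (1 : ℝ) := sum_le_sum fun m _ => hle m
    _ = n + 1 := by simp

lemma sum_cesaroMean_mul (G : α → ℝ) (n : ℕ) :
    ∑ i ∈ S, cesaroMean μ n i * G i = (∑ m ∈ range (n + 1), ∑ i ∈ S, μ m i * G i) / (n + 1) := by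
  simp only [cesaroMean, div_mul_eq_mul_div, sum_mul, ← sum_div]
  rw [sum_comm]

lemma sum_cesaroMean (hμ₁ : ∀ n, ∑ i ∈ S, μ n i = 1) (n : ℕ) :
    ∑ i ∈ S, cesaroMean μ n i = 1 := by
  have := sum_cesaroMean_mul (S := S) (μ := μ) 1 n
  simp only [Pi.one_apply, mul_one, hμ₁, sum_const, card_range, nsmul_eq_mul] at this
  rw [this]
  push_cast
  exact div_self (by positivity)

lemma sum_cesaroMean_mul_transition {T : α → α → ℝ}
    (hstep : ∀ n j, μ (n + 1) j = ∑ i ∈ S, μ n i * T i j) (n : ℕ) (j : α) :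
    ∑ i ∈ S, cesaroMean μ n i * T i j
      = cesaroMean μ n j + (μ (n + 1) j - μ 0 j) / (n + 1) := by
  rw [sum_cesaroMean_mul, cesaroMean, ← add_div]
  simp only [← hstep]
  congr 1
  linarith [sum_range_succ' (μ · j) (n + 1), sum_range_succ (μ · j) (n + 1)]

theorem exists_stationary_of_tendsto_cesaro (T : α → α → ℝ) (G : α → ℝ) {L : ℝ}
    (hμ : ∀ n i, 0 ≤ μ n i) (hμ₁ : ∀ n, ∑ i ∈ S, μ n i = 1)
    (hstep : ∀ n j, μ (n + 1) j = ∑ i ∈ S, μ n i * T i j)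
    (hL : Tendsto (fun n : ℕ => (∑ m ∈ range n, ∑ i ∈ S, μ m i * G i) / n) atTop (𝓝 L)) :
    ∃ q : α → ℝ, (∀ i ∉ S, q i = 0) ∧ (∀ i, 0 ≤ q i) ∧ ∑ i ∈ S, q i = 1 ∧
      (∀ j ∈ S, q j = ∑ i ∈ S, q i * T i j) ∧ ∑ i ∈ S, q i * G i = L := by
  classical
  obtain ⟨q₀, hq₀, ψ, hψ, hψq₀⟩ := (isCompact_Icc (a := (0 : S → ℝ)) (b := 1)).tendsto_subseq
    (x := fun n (i : S) => cesaroMean μ n i) fun n =>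
      ⟨fun i => (cesaroMean_mem_Icc hμ hμ₁ n i.2).1, fun i => (cesaroMean_mem_Icc hμ hμ₁ n i.2).2⟩
  let q : α → ℝ := fun i => if h : i ∈ S then q₀ ⟨i, h⟩ else 0
  have hq : ∀ i ∈ S, Tendsto (fun k => cesaroMean μ (ψ k) i) atTop (𝓝 (q i)) := fun i hi => by
    simpa [q, hi] using tendsto_pi_nhds.mp hψq₀ ⟨i, hi⟩
  have hsum : ∀ F : α → ℝ, Tendsto (fun k => ∑ i ∈ S, cesaroMean μ (ψ k) i * F i) atTop
      (𝓝 (∑ i ∈ S, q i * F i)) := fun F =>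
    tendsto_finsetSum _ fun i hi => (hq i hi).mul_const _
  have hψ₁ : Tendsto (fun k => (ψ k : ℝ) + 1) atTop atTop :=
    tendsto_atTop_add_const_right _ _ (tendsto_natCast_atTop_atTop.comp hψ.tendsto_atTop)
  refine ⟨q, fun i hi => dif_neg hi, fun i => ?_, ?_, fun j hj => ?_, ?_⟩
  · by_cases hi : i ∈ S
    · simpa [q, hi] using hq₀.1 ⟨i, hi⟩
    · simp [q, hi]
  · have := hsum 1
    simp only [Pi.one_apply, mul_one, sum_cesaroMean hμ₁] at this
    exact tendsto_nhds_unique this tendsto_const_nhds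
  · have hμj : ∀ n, μ n j ∈ Set.Icc 0 1 := fun n =>
      ⟨hμ n j, hμ₁ n ▸ single_le_sum (fun i _ => hμ n i) hj⟩
    have hdefect : Tendsto (fun k => (μ (ψ k + 1) j - μ 0 j) / ((ψ k : ℝ) + 1)) atTop (𝓝 0) :=
      tendsto_bdd_div_atTop_nhds_zero (b := -1) (B := 1)
        (Eventually.of_forall fun k => by linarith [(hμj (ψ k + 1)).1, (hμj 0).2])
        (Eventually.of_forall fun k => by linarith [(hμj (ψ k + 1)).2, (hμj 0).1]) hψ₁
    refine tendsto_nhds_unique ?_ (hsum (T · j))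
    simpa [sum_cesaroMean_mul_transition hstep] using (hq j hj).add hdefect
  · refine tendsto_nhds_unique (hsum G) ?_
    have := hL.comp ((tendsto_add_atTop_nat 1).comp hψ.tendsto_atTop)
    simpa [Function.comp_def, sum_cesaroMean_mul] using this

end Cesaro

section ViterbiOperator

open scoped Classical

variable {V E A : Type*} [DecidableEq A] {src dst : E → V} {lab : E → A}

lemma StronglyConnected.exists_src_eq (h : StronglyConnected src dst) (v : V) :
    ∃ e, src e = v :=
  let ⟨_, _, _, hsrc, _⟩ := h v v; ⟨_, hsrc⟩

lemma StronglyConnected.exists_dst_eq (h : StronglyConnected src dst) (v : V) :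
    ∃ e, dst e = v :=
  let ⟨_, _, _, _, hdst⟩ := h v v; ⟨_, hdst⟩

lemma ham_le_one (x y : A) : ham x y ≤ 1 := by
  unfold ham; split <;> omega

lemma minS_le (s : V → ℕ) (v : V) : minS s ≤ s v :=
  Nat.sInf_le ⟨v, rfl⟩

lemma exists_eq_minS [Nonempty V] (s : V → ℕ) : ∃ v, s v = minS s :=
  Nat.sInf_mem (Set.range_nonempty s)

lemma minS_const [Nonempty V] (c : ℕ) : minS (fun _ : V => c) = c := by
  obtain ⟨v, hv⟩ := exists_eq_minS (fun _ : V => c)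
  exact hv.symm

lemma minS_add_const [Nonempty V] (s : V → ℕ) (c : ℕ) :
    minS (fun v => s v + c) = minS s + c := by
  obtain ⟨v, hv⟩ := exists_eq_minS s
  obtain ⟨w, hw⟩ := exists_eq_minS (fun v => s v + c)
  have := minS_le (fun v => s v + c) v
  have := minS_le s w
  omega

lemma minS_sub_minS [Nonempty V] (s : V → ℕ) : minS (fun v => s v - minS s) = 0 := by
  obtain ⟨v, hv⟩ := exists_eq_minS s
  have := minS_le (fun v => s v - minS s) v
  omega

lemma Vop_le (s : V → ℕ) (x : A) (e : E) :
    Vop src dst lab s x (dst e) ≤ s (src e) + ham x (lab e) :=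
  Nat.sInf_le ⟨e, rfl, rfl⟩

lemma exists_Vop_eq (hin : ∀ v, ∃ e, dst e = v) (s : V → ℕ) (x : A) (v : V) :
    ∃ e, dst e = v ∧ Vop src dst lab s x v = s (src e) + ham x (lab e) := by
  obtain ⟨e, he⟩ := hin v
  exact Nat.sInf_mem
    (⟨_, e, he, rfl⟩ : {m | ∃ e, dst e = v ∧ m = s (src e) + ham x (lab e)}.Nonempty)

lemma Vop_add_const (hin : ∀ v, ∃ e, dst e = v) (s : V → ℕ) (c : ℕ) (x : A) :
    Vop src dst lab (fun v => s v + c) x = fun v => Vop src dst lab s x v + c := by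
  funext v
  obtain ⟨e, rfl, he⟩ := exists_Vop_eq (src := src) (lab := lab) hin s x v
  obtain ⟨e', he'v, he'⟩ := exists_Vop_eq (src := src) (lab := lab) hin (fun v => s v + c) x (dst e)
  have := Vop_le (src := src) (dst := dst) (lab := lab) (fun v => s v + c) x e
  have := he'v ▸ Vop_le (src := src) (dst := dst) (lab := lab) s x e'
  omega

lemma minS_Vred [Nonempty V] (s : V → ℕ) (x : A) : minS (Vred src dst lab s x) = 0 :=
  minS_sub_minS _

lemma Vop_eq_Vred_of_minS_eq_zero {s : V → ℕ} {x : A} (h : minS (Vop src dst lab s x) = 0) :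
    Vop src dst lab s x = Vred src dst lab s x := by
  funext v
  simp [Vred, h]

lemma zero_mem_SG : (fun _ : V => (0 : ℕ)) ∈ SG src dst lab :=
  ⟨[], rfl⟩

lemma Vred_mem_SG {s : V → ℕ} (hs : s ∈ SG src dst lab) (x : A) :
    Vred src dst lab s x ∈ SG src dst lab := by
  obtain ⟨l, rfl⟩ := hs
  exact ⟨l ++ [x], by rw [List.foldl_append]; rfl⟩

lemma minS_eq_zero_of_mem_SG [Nonempty V] {s : V → ℕ} (hs : s ∈ SG src dst lab) :
    minS s = 0 := by
  obtain ⟨l, rfl⟩ := hs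
  rcases l.eq_nil_or_concat with rfl | ⟨l, x, rfl⟩
  · exact minS_const 0
  · rw [List.concat_eq_append, List.foldl_append]
    exact minS_Vred _ x

lemma minS_Vop_eq_ite [Nonempty V] (hout : ∀ v, ∃ e, src e = v) {s : V → ℕ}
    (hs : s ∈ SG src dst lab) (x : A) :
    minS (Vop src dst lab s x) = if Vop src dst lab s x ∈ SG src dst lab then 0 else 1 := by
  split_ifs with hV
  · exact minS_eq_zero_of_mem_SG hV
  · obtain ⟨v, hv⟩ := exists_eq_minS s
    obtain ⟨e, rfl⟩ := hout v
    have := minS_le (Vop src dst lab s x) (dst e)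
    have := Vop_le (src := src) (dst := dst) (lab := lab) s x e
    have := ham_le_one x (lab e)
    have : minS (Vop src dst lab s x) ≠ 0 := fun h =>
      hV (Vop_eq_Vred_of_minS_eq_zero h ▸ Vred_mem_SG hs x)
    rw [minS_eq_zero_of_mem_SG hs] at hv
    omega

lemma sum_mul_minS_Vop [Fintype A] [Nonempty V] (hout : ∀ v, ∃ e, src e = v) {s : V → ℕ}
    (hs : s ∈ SG src dst lab) (p : A → ℝ) :
    ∑ x, p x * (minS (Vop src dst lab s x) : ℝ) =
      ∑ x, if Vop src dst lab s x ∉ SG src dst lab then p x else 0 := by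
  refine sum_congr rfl fun x _ => ?_
  rw [minS_Vop_eq_ite hout hs]
  split_ifs <;> simp

end ViterbiOperator

section ViterbiAlgorithm

variable {V E A : Type*} [DecidableEq A] {src dst : E → V} {lab : E → A}

lemma VSeq_eq_SredSeq_add (x : ℕ → A) (n : ℕ) :
    VSeq src dst lab x n = fun v => SredSeq src dst lab x n v + minS (VSeq src dst lab x n) :=
  funext fun v => (Nat.sub_add_cancel (minS_le _ v)).symm

lemma VSeq_succ_eq (hin : ∀ v, ∃ e, dst e = v) (x : ℕ → A) (n : ℕ) :
    VSeq src dst lab x (n + 1) =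
      fun v => Vop src dst lab (SredSeq src dst lab x n) (x n) v + minS (VSeq src dst lab x n) := by
  rw [← Vop_add_const hin, ← VSeq_eq_SredSeq_add]
  rfl

lemma minS_VSeq_succ [Nonempty V] (hin : ∀ v, ∃ e, dst e = v) (x : ℕ → A) (n : ℕ) :
    minS (VSeq src dst lab x (n + 1)) =
      minS (VSeq src dst lab x n) + minS (Vop src dst lab (SredSeq src dst lab x n) (x n)) := by
  rw [VSeq_succ_eq hin, minS_add_const, add_comm]

lemma SredSeq_succ [Nonempty V] (hin : ∀ v, ∃ e, dst e = v) (x : ℕ → A) (n : ℕ) :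
    SredSeq src dst lab x (n + 1) = Vred src dst lab (SredSeq src dst lab x n) (x n) := by
  funext v
  simp only [SredSeq, Vred]
  rw [minS_VSeq_succ hin, VSeq_succ_eq hin]
  dsimp only
  omega

lemma SredSeq_mem_SG [Nonempty V] (hin : ∀ v, ∃ e, dst e = v) (x : ℕ → A) (n : ℕ) :
    SredSeq src dst lab x n ∈ SG src dst lab := by
  induction n with
  | zero =>
    convert zero_mem_SG using 1
    funext v
    exact Nat.zero_sub _
  | succ n ih => exact SredSeq_succ hin x n ▸ Vred_mem_SG ih (x n)

lemma VSeq_congr {x x' : ℕ → A} {n : ℕ} (h : ∀ i < n, x i = x' i) :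
    VSeq src dst lab x n = VSeq src dst lab x' n := by
  induction n with
  | zero => rfl
  | succ n ih =>
    show Vop _ _ _ (VSeq src dst lab x n) (x n) = Vop _ _ _ (VSeq src dst lab x' n) (x' n)
    rw [ih fun i hi => h i (by omega), h n (by omega)]

lemma SredSeq_congr {x x' : ℕ → A} {n : ℕ} (h : ∀ i < n, x i = x' i) :
    SredSeq src dst lab x n = SredSeq src dst lab x' n := by
  unfold SredSeq
  rw [VSeq_congr h]

lemma VSeq_succ_le_pathCost (x : ℕ → A) (n : ℕ) {e : ℕ → E} (he : EdgeChain src dst (n + 1) e) :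
    VSeq src dst lab x (n + 1) (dst (e n)) ≤ ∑ i ∈ range (n + 1), ham (x i) (lab (e i)) := by
  induction n with
  | zero => simpa [VSeq] using Vop_le (lab := lab) (fun _ => 0) (x 0) (e 0)
  | succ n ih =>
    calc VSeq src dst lab x (n + 2) (dst (e (n + 1)))
        ≤ VSeq src dst lab x (n + 1) (src (e (n + 1))) + ham (x (n + 1)) (lab (e (n + 1))) :=
          Vop_le _ _ _
      _ = VSeq src dst lab x (n + 1) (dst (e n)) + ham (x (n + 1)) (lab (e (n + 1))) := by
          rw [he n (by omega)]
      _ ≤ _ := by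
          rw [sum_range_succ _ (n + 1)]
          exact Nat.add_le_add_right (ih fun i hi => he i (by omega)) _

lemma exists_pathCost_eq_VSeq_succ (hin : ∀ v, ∃ e, dst e = v) (x : ℕ → A) (n : ℕ) (v : V) :
    ∃ e : ℕ → E, EdgeChain src dst (n + 1) e ∧ dst (e n) = v ∧
      VSeq src dst lab x (n + 1) v = ∑ i ∈ range (n + 1), ham (x i) (lab (e i)) := by
  induction n generalizing v with
  | zero =>
    obtain ⟨e, he, hVop⟩ := exists_Vop_eq (src := src) (lab := lab) hin (fun _ => 0) (x 0) v
    exact ⟨fun _ => e, fun i hi => by omega, he, by simpa [VSeq] using hVop⟩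
  | succ n ih =>
    obtain ⟨e, he, hVop⟩ :=
      exists_Vop_eq (src := src) (lab := lab) hin (VSeq src dst lab x (n + 1)) (x (n + 1)) v
    obtain ⟨f, hf, hfe, hcost⟩ := ih (src e)
    refine ⟨Function.update f (n + 1) e, fun i hi => ?_, by simpa using he, ?_⟩
    · rcases Nat.lt_or_ge (i + 1) (n + 1) with hi' | hi'
      · rw [Function.update_of_ne (by omega), Function.update_of_ne (by omega)]
        exact hf i hi'
      · obtain rfl : i = n := by omega
        rw [Function.update_of_ne (by omega), Function.update_self]
        exact hfe
    · rw [sum_range_succ, Function.update_self]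
      calc VSeq src dst lab x (n + 2) v
          = VSeq src dst lab x (n + 1) (src e) + ham (x (n + 1)) (lab e) := hVop
        _ = _ := by
          rw [hcost]
          congr 1
          exact sum_congr rfl fun i hi => by
            rw [Function.update_of_ne (by rw [mem_range] at hi; omega)]

lemma minDist_zero [Nonempty E] (w : Fin 0 → A) : minDist src dst lab 0 w = 0 :=
  Nat.eq_zero_of_le_zero <|
    Nat.sInf_le ⟨fun _ => Classical.arbitrary E, fun i hi => by omega, by simp⟩

lemma minDist_eq_minS_VSeq [Nonempty V] (hin : ∀ v, ∃ e, dst e = v) (x : ℕ → A) (n : ℕ) :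
    minDist src dst lab n (fun i => x i) = minS (VSeq src dst lab x n) := by
  have : Nonempty E := let ⟨e, _⟩ := hin (Classical.arbitrary V); ⟨e⟩
  cases n with
  | zero => rw [minDist_zero]; exact (minS_const 0).symm
  | succ n =>
    apply le_antisymm
    · obtain ⟨v, hv⟩ := exists_eq_minS (VSeq src dst lab x (n + 1))
      obtain ⟨e, he, -, hcost⟩ := exists_pathCost_eq_VSeq_succ (lab := lab) hin x n v
      refine Nat.sInf_le ⟨e, he, ?_⟩
      rw [← hv, hcost, Fin.sum_univ_eq_sum_range (fun i => ham (x i) (lab (e i)))]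
    · obtain ⟨e, he, -, -⟩ :=
        exists_pathCost_eq_VSeq_succ (lab := lab) hin x n (Classical.arbitrary V)
      refine le_csInf ⟨_, e, he, rfl⟩ ?_
      rintro m ⟨f, hf, rfl⟩
      rw [Fin.sum_univ_eq_sum_range (fun i => ham (x i) (lab (f i)))]
      exact (minS_le _ _).trans (VSeq_succ_le_pathCost x n hf)

end ViterbiAlgorithm

section IidWords

variable {A : Type*} (p : A → ℝ)

lemma sum_fun_fin_succ [Fintype A] {M : Type*} [AddCommMonoid M] {n : ℕ}
    (F : (Fin (n + 1) → A) → M) :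
    ∑ w, F w = ∑ w : Fin n → A, ∑ a, F (Fin.snoc w a) := by
  rw [← (Fin.snocEquiv fun _ => A).sum_comp, Fintype.sum_prod_type, sum_comm]
  rfl

lemma sum_fun_fin_add [Fintype A] {M : Type*} [AddCommMonoid M] {m n : ℕ}
    (F : (Fin (m + n) → A) → M) :
    ∑ w, F w = ∑ y : Fin m → A, ∑ z : Fin n → A, F (Fin.append y z) := by
  rw [← (Fin.appendEquiv m n).sum_comp, Fintype.sum_prod_type]
  rfl

lemma prod_snoc {n : ℕ} (w : Fin n → A) (a : A) :
    ∏ i, p ((Fin.snoc w a : Fin (n + 1) → A) i) = (∏ i, p (w i)) * p a := by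
  simp [Fin.prod_univ_castSucc]

lemma prod_append {m n : ℕ} (y : Fin m → A) (z : Fin n → A) :
    ∏ i, p (Fin.append y z i) = (∏ i, p (y i)) * ∏ i, p (z i) := by
  simp [Fin.prod_univ_add]

lemma sum_prod_eq_one [Fintype A] (hp₁ : ∑ a, p a = 1) (n : ℕ) :
    ∑ w : Fin n → A, ∏ i, p (w i) = 1 := by
  rw [← Fintype.prod_sum]
  simp [hp₁]

end IidWords

lemma sum_mul_comp_eq_sum_fiberwise {ι α : Type*} [Fintype ι] [DecidableEq α] {S : Finset α}
    {f : ι → α} (hf : ∀ i, f i ∈ S) (w : ι → ℝ) (H : α → ℝ) :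
    ∑ i, w i * H (f i) = ∑ s ∈ S, (∑ i with f i = s, w i) * H s := by
  rw [← sum_fiberwise_of_maps_to fun i _ => hf i]
  refine sum_congr rfl fun s _ => ?_
  rw [sum_mul]
  exact sum_congr rfl fun i hi => by rw [(mem_filter.mp hi).2]

section ExtendWord

variable {A : Type*} [Nonempty A]

/-- Only the first `n` letters are ever read, so the padding letter is irrelevant. -/
noncomputable def extendWord {n : ℕ} (w : Fin n → A) (i : ℕ) : A :=
  if h : i < n then w ⟨i, h⟩ else Classical.arbitrary A

@[simp]
lemma extendWord_fin {n : ℕ} (w : Fin n → A) (i : Fin n) : extendWord w i = w i := by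
  simp [extendWord]

lemma extendWord_snoc_of_lt {n : ℕ} (w : Fin n → A) (a : A) {i : ℕ} (hi : i < n) :
    extendWord (Fin.snoc w a : Fin (n + 1) → A) i = extendWord w i := by
  simp [extendWord, hi, Nat.lt_succ_of_lt hi, Fin.snoc]

lemma extendWord_snoc_last {n : ℕ} (w : Fin n → A) (a : A) :
    extendWord (Fin.snoc w a : Fin (n + 1) → A) n = a := by
  simp [extendWord, Fin.snoc]

end ExtendWord

section WordState

variable {V E A : Type*} [DecidableEq A] [Nonempty A] {src dst : E → V} {lab : E → A}

variable (src dst lab) in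
noncomputable def wordState {n : ℕ} (w : Fin n → A) : V → ℕ :=
  SredSeq src dst lab (extendWord w) n

variable [Nonempty V]

lemma wordState_mem_SG (hin : ∀ v, ∃ e, dst e = v) {n : ℕ} (w : Fin n → A) :
    wordState src dst lab w ∈ SG src dst lab :=
  SredSeq_mem_SG hin _ n

lemma wordState_snoc (hin : ∀ v, ∃ e, dst e = v) {n : ℕ} (w : Fin n → A) (a : A) :
    wordState src dst lab (Fin.snoc w a : Fin (n + 1) → A) =
      Vred src dst lab (wordState src dst lab w) a := by
  rw [wordState, SredSeq_succ hin, extendWord_snoc_last,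
    SredSeq_congr fun i hi => extendWord_snoc_of_lt w a hi, wordState]

lemma minDist_eq_minS_VSeq_extendWord (hin : ∀ v, ∃ e, dst e = v) {n : ℕ} (w : Fin n → A) :
    minDist src dst lab n w = minS (VSeq src dst lab (extendWord w) n) := by
  simpa using minDist_eq_minS_VSeq (lab := lab) hin (extendWord w) n

lemma minDist_snoc (hin : ∀ v, ∃ e, dst e = v) {n : ℕ} (w : Fin n → A) (a : A) :
    minDist src dst lab (n + 1) (Fin.snoc w a) =
      minDist src dst lab n w + minS (Vop src dst lab (wordState src dst lab w) a) := by
  rw [minDist_eq_minS_VSeq_extendWord hin, minS_VSeq_succ hin, extendWord_snoc_last,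
    VSeq_congr fun i hi => extendWord_snoc_of_lt w a hi,
    SredSeq_congr fun i hi => extendWord_snoc_of_lt w a hi,
    ← minDist_eq_minS_VSeq_extendWord hin, wordState]

end WordState

section StateDistribution

open scoped Classical

variable {V E A : Type*} [DecidableEq A] [Fintype A] [Nonempty A] {src dst : E → V} {lab : E → A}
variable (p : A → ℝ)

variable (src dst lab) in
noncomputable def stateDist (n : ℕ) (s : V → ℕ) : ℝ :=
  ∑ w : Fin n → A with wordState src dst lab w = s, ∏ i, p (w i)

variable (src dst lab) in
noncomputable def viterbiKernel (s s' : V → ℕ) : ℝ :=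
  ∑ x, if Vred src dst lab s x = s' then p x else 0

lemma stateDist_nonneg (hp : ∀ x, 0 ≤ p x) (n : ℕ) (s : V → ℕ) :
    0 ≤ stateDist src dst lab p n s :=
  sum_nonneg fun w _ => prod_nonneg fun i _ => hp (w i)

variable [Nonempty V]

lemma sum_prod_mul_wordState (hin : ∀ v, ∃ e, dst e = v) (hfin : (SG src dst lab).Finite)
    (n : ℕ) (H : (V → ℕ) → ℝ) :
    ∑ w : Fin n → A, (∏ i, p (w i)) * H (wordState src dst lab w) =
      ∑ s ∈ hfin.toFinset, stateDist src dst lab p n s * H s :=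
  sum_mul_comp_eq_sum_fiberwise (fun w => hfin.mem_toFinset.mpr (wordState_mem_SG hin w)) _ H

lemma sum_stateDist (hin : ∀ v, ∃ e, dst e = v) (hfin : (SG src dst lab).Finite)
    (hp₁ : ∑ x, p x = 1) (n : ℕ) :
    ∑ s ∈ hfin.toFinset, stateDist src dst lab p n s = 1 := by
  simpa [sum_prod_eq_one p hp₁] using (sum_prod_mul_wordState p hin hfin n 1).symm

lemma stateDist_succ (hin : ∀ v, ∃ e, dst e = v) (hfin : (SG src dst lab).Finite)
    (n : ℕ) (s' : V → ℕ) :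
    stateDist src dst lab p (n + 1) s' =
      ∑ s ∈ hfin.toFinset, stateDist src dst lab p n s * viterbiKernel src dst lab p s s' := by
  rw [← sum_prod_mul_wordState p hin hfin, stateDist, sum_filter, sum_fun_fin_succ]
  refine sum_congr rfl fun w _ => ?_
  simp only [viterbiKernel, mul_sum, wordState_snoc hin, prod_snoc, mul_ite, mul_zero]

lemma aSeq_succ (hin : ∀ v, ∃ e, dst e = v) (hfin : (SG src dst lab).Finite)
    (hp₁ : ∑ x, p x = 1) (n : ℕ) :
    aSeq src dst lab p (n + 1) = aSeq src dst lab p n +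
      ∑ s ∈ hfin.toFinset, stateDist src dst lab p n s *
        ∑ x, p x * (minS (Vop src dst lab s x) : ℝ) := by
  rw [← sum_prod_mul_wordState p hin hfin, aSeq, aSeq, sum_fun_fin_succ, ← sum_add_distrib]
  refine sum_congr rfl fun w _ => ?_
  have hsplit : ∀ x, (∏ i, p (w i)) * p x *
      ((minDist src dst lab n w : ℝ) + minS (Vop src dst lab (wordState src dst lab w) x)) =
      (∏ i, p (w i)) * minDist src dst lab n w * p x +
        (∏ i, p (w i)) * (p x * minS (Vop src dst lab (wordState src dst lab w) x)) :=
    fun x => by ring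
  simp only [prod_snoc, minDist_snoc hin, Nat.cast_add, hsplit, sum_add_distrib, ← mul_sum, hp₁,
    mul_one]

lemma aSeq_eq_sum_range (hin : ∀ v, ∃ e, dst e = v) (hfin : (SG src dst lab).Finite)
    (hp₁ : ∑ x, p x = 1) (n : ℕ) :
    aSeq src dst lab p n = ∑ m ∈ range n, ∑ s ∈ hfin.toFinset,
      stateDist src dst lab p m s * ∑ x, p x * (minS (Vop src dst lab s x) : ℝ) := by
  induction n with
  | zero =>
    have : Nonempty E := let ⟨e, _⟩ := hin (Classical.arbitrary V); ⟨e⟩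
    simp [aSeq, minDist_zero]
  | succ n ih => rw [aSeq_succ p hin hfin hp₁, ih, sum_range_succ]

end StateDistribution

section Superadditivity

variable {V E A : Type*} [DecidableEq A] {src dst : E → V} {lab : E → A}

lemma minDist_le_pathCost {n : ℕ} (w : Fin n → A) {e : ℕ → E} (he : EdgeChain src dst n e) :
    minDist src dst lab n w ≤ ∑ i, ham (w i) (lab (e i)) :=
  Nat.sInf_le ⟨e, he, rfl⟩

variable [Nonempty V]

lemma exists_edgeChain (hout : ∀ v, ∃ e, src e = v) :
    ∃ e : ℕ → E, ∀ n, EdgeChain src dst n e := by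
  choose out hout using hout
  refine ⟨fun i => (out ∘ dst)^[i] (out (Classical.arbitrary V)), fun n i _ => ?_⟩
  simp only [Function.iterate_succ_apply', Function.comp_apply, hout]

lemma exists_minDist_eq (hout : ∀ v, ∃ e, src e = v) {n : ℕ} (w : Fin n → A) :
    ∃ e : ℕ → E, EdgeChain src dst n e ∧ minDist src dst lab n w = ∑ i, ham (w i) (lab (e i)) := by
  obtain ⟨e, he⟩ := exists_edgeChain (dst := dst) hout
  exact Nat.sInf_mem (⟨_, e, he n, rfl⟩ :
    {m | ∃ e : ℕ → E, EdgeChain src dst n e ∧ m = ∑ i, ham (w i) (lab (e i))}.Nonempty)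

lemma minDist_le_length (hout : ∀ v, ∃ e, src e = v) {n : ℕ} (w : Fin n → A) :
    minDist src dst lab n w ≤ n := by
  obtain ⟨e, he, heq⟩ := exists_minDist_eq (lab := lab) hout w
  calc minDist src dst lab n w = ∑ i, ham (w i) (lab (e i)) := heq
    _ ≤ ∑ _i : Fin n, 1 := sum_le_sum fun i _ => ham_le_one _ _
    _ = n := by simp

/-- An optimal path for a concatenated word splits into admissible paths for both halves. -/
lemma minDist_add_le_minDist_append (hout : ∀ v, ∃ e, src e = v) {m n : ℕ}
    (y : Fin m → A) (z : Fin n → A) :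
    minDist src dst lab m y + minDist src dst lab n z ≤
      minDist src dst lab (m + n) (Fin.append y z) := by
  obtain ⟨e, he, heq⟩ := exists_minDist_eq (lab := lab) hout (Fin.append y z)
  have hy := minDist_le_pathCost (lab := lab) y (e := e) fun i hi => he i (by omega)
  have hz := minDist_le_pathCost (lab := lab) z (e := fun i => e (m + i)) fun i hi =>
    he (m + i) (by omega)
  rw [heq, Fin.sum_univ_add]
  simpa using add_le_add hy hz

variable [Fintype A] {p : A → ℝ}

lemma aSeq_le_length (hp : ∀ x, 0 ≤ p x) (hp₁ : ∑ x, p x = 1)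
    (hout : ∀ v, ∃ e, src e = v) (n : ℕ) : aSeq src dst lab p n ≤ n := by
  calc aSeq src dst lab p n ≤ ∑ w : Fin n → A, (∏ i, p (w i)) * n :=
        sum_le_sum fun w _ => mul_le_mul_of_nonneg_left
          (by exact_mod_cast minDist_le_length hout w) (prod_nonneg fun i _ => hp (w i))
    _ = n := by rw [← sum_mul, sum_prod_eq_one p hp₁, one_mul]

lemma aSeq_add_le (hp : ∀ x, 0 ≤ p x) (hp₁ : ∑ x, p x = 1)
    (hout : ∀ v, ∃ e, src e = v) (m n : ℕ) :
    aSeq src dst lab p m + aSeq src dst lab p n ≤ aSeq src dst lab p (m + n) := by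
  have hsplit : aSeq src dst lab p m + aSeq src dst lab p n =
      ∑ y : Fin m → A, ∑ z : Fin n → A, (∏ i, p (y i)) * (∏ i, p (z i)) *
        ((minDist src dst lab m y : ℝ) + minDist src dst lab n z) := by
    simp only [aSeq, mul_add, sum_add_distrib]
    congr 1
    · refine sum_congr rfl fun y _ => ?_
      rw [← sum_mul, ← mul_sum, sum_prod_eq_one p hp₁, mul_one]
    · rw [sum_comm]
      refine sum_congr rfl fun z _ => ?_
      rw [← sum_mul, ← sum_mul, sum_prod_eq_one p hp₁, one_mul]
  rw [hsplit, aSeq, sum_fun_fin_add]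
  refine sum_le_sum fun y _ => sum_le_sum fun z _ => ?_
  rw [prod_append]
  exact mul_le_mul_of_nonneg_left (by exact_mod_cast minDist_add_le_minDist_append hout y z)
    (mul_nonneg (prod_nonneg fun i _ => hp (y i)) (prod_nonneg fun i _ => hp (z i)))

lemma exists_tendsto_aSeq_div (hp : ∀ x, 0 ≤ p x) (hp₁ : ∑ x, p x = 1)
    (hout : ∀ v, ∃ e, src e = v) :
    ∃ L, Tendsto (fun n : ℕ => aSeq src dst lab p n / n) atTop (𝓝 L) := by
  have hsub : Subadditive fun n => -aSeq src dst lab p n := fun m n => by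
    linarith [aSeq_add_le (dst := dst) (lab := lab) hp hp₁ hout m n]
  have hbdd : BddBelow (Set.range fun n : ℕ => -aSeq src dst lab p n / n) := by
    refine ⟨-1, ?_⟩
    rintro _ ⟨n, rfl⟩
    rcases n.eq_zero_or_pos with rfl | hn
    · simp
    · show -1 ≤ -aSeq src dst lab p n / n
      rw [neg_div, neg_le_neg_iff, div_le_one (by exact_mod_cast hn)]
      exact aSeq_le_length hp hp₁ hout n
  exact ⟨-hsub.lim, by simpa [neg_div] using (hsub.tendsto_lim hbdd).neg⟩

end Superadditivity

open Filter in
open scoped Classical in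
theorem exists_stationary_distribution_computing_DG_general
    {V E A : Type*} [Fintype V] [Nonempty V] [Fintype A] [DecidableEq A]
    (src dst : E → V) (lab : E → A) (hconn : StronglyConnected src dst)
    (p : A → ℝ) (hp : ∀ x : A, 0 ≤ p x) (hsum : ∑ x : A, p x = 1)
    (hfin : (SG src dst lab).Finite) :
    ∃ q : (V → ℕ) → ℝ,
      (∀ s, s ∉ SG src dst lab → q s = 0) ∧
      (∀ s, 0 ≤ q s) ∧
      (∑ s ∈ hfin.toFinset, q s = 1) ∧
      (∀ s' ∈ SG src dst lab,
        q s' = ∑ s ∈ hfin.toFinset, ∑ x : A,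
          if Vred src dst lab s x = s' then q s * p x else 0) ∧
      Tendsto (fun n : ℕ => aSeq src dst lab p n / n) atTop
        (nhds (∑ s ∈ hfin.toFinset, ∑ x : A,
          if Vop src dst lab s x ∉ SG src dst lab then q s * p x else 0)) := by
  have hout := hconn.exists_src_eq
  have hin := hconn.exists_dst_eq
  have : Nonempty A := let ⟨e, _⟩ := hin (Classical.arbitrary V); ⟨lab e⟩
  obtain ⟨L, hL⟩ := exists_tendsto_aSeq_div (dst := dst) (lab := lab) hp hsum hout
  obtain ⟨q, hq_supp, hq_nonneg, hq_sum, hq_stat, hq_L⟩ :=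
    exists_stationary_of_tendsto_cesaro (S := hfin.toFinset) (μ := stateDist src dst lab p)
      (viterbiKernel src dst lab p) _ (stateDist_nonneg p hp) (sum_stateDist p hin hfin hsum)
      (stateDist_succ p hin hfin) (by simpa only [aSeq_eq_sum_range p hin hfin hsum] using hL)
  refine ⟨q, fun s hs => hq_supp s (by simpa using hs), hq_nonneg, hq_sum, fun s' hs' => ?_, ?_⟩
  · simpa [viterbiKernel, mul_sum] using hq_stat s' (by simpa using hs')
  · convert hL using 2
    rw [← hq_L]
    refine sum_congr rfl fun s hs => ?_
    rw [sum_mul_minS_Vop hout (hfin.mem_toFinset.mp hs), mul_sum]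
    simp only [mul_ite, mul_zero]

open Filter in
open scoped Classical in
/-- Theorem 1, existence: there is a probability distribution
`(q(s) : s ∈ 𝒮_G)` that is stationary for the reduced Viterbi Markov transitions and
for which `D(G) = Σ_{(s,x) : V(s,x) ∉ 𝒮_G} q(s) p(x)`; here `D(G)` is the limit of
`a_n / n` (asserted by the `Tendsto` clause). -/
theorem exists_stationary_distribution_computing_DG
    {V E A : Type*} [Fintype V] [Nonempty V] [Fintype E] [Fintype A] [DecidableEq A]
    (src dst : E → V) (lab : E → A) (hconn : StronglyConnected src dst)
    (k : ℕ) (hk : PrimIndex src dst k)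
    (p : A → ℝ) (hp : ∀ x : A, 0 ≤ p x) (hsum : ∑ x : A, p x = 1)
    (hfin : (SG src dst lab).Finite) :
    ∃ q : (V → ℕ) → ℝ,
      (∀ s, s ∉ SG src dst lab → q s = 0) ∧
      (∀ s, 0 ≤ q s) ∧
      (∑ s ∈ hfin.toFinset, q s = 1) ∧
      (∀ s' ∈ SG src dst lab,
        q s' = ∑ s ∈ hfin.toFinset, ∑ x : A,
          if Vred src dst lab s x = s' then q s * p x else 0) ∧
      Tendsto (fun n : ℕ => aSeq src dst lab p n / n) atTop
        (nhds (∑ s ∈ hfin.toFinset, ∑ x : A,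
          if Vop src dst lab s x ∉ SG src dst lab then q s * p x else 0)) :=
  exists_stationary_distribution_computing_DG_general src dst lab hconn p hp hsum hfin
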